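/- arXiv:2410.10495 — 5 statements merged into one kernel-verified Lean document; each statement's English description precedes it below -/
import Mathlib

section
/- Let P be a rank-1 orthogonal projector on A ⊗ B onto a state |ψ⟩ with Schmidt decomposition |ψ⟩ = Σᵢ αᵢ |ψᵢ¹⟩_A |ψᵢ²⟩_B (all αᵢ ≠ 0). Then the induced algebra of P on B, i.e. the C*-algebra generated by the operators {⟨i|_A P |j⟩_A} over an orthonormal basis of A, equals the full matrix algebra L(span{|ψᵢ²⟩}). -/
/-!
Writing `ψ(i, ·) = Σ_s α_s u_s(i) w_s` for the rows of `ψ`, the block `⟨i|P|j⟩` is the outer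
product `|ψ(i, ·)⟩⟨ψ(j, ·)|`. Outer products `|x⟩⟨y|` with `x, y` ranging over a subspace `V` span
an algebra closed under `*` and `star` (since `|x⟩⟨y| |x'⟩⟨y'| = ⟨y|x'⟩ |x⟩⟨y'|`), which therefore is
the algebra they generate, and it only depends on `V`. By orthonormality of the `u_s` and
`α_s ≠ 0`, the rows of `ψ` span the same space `V` as the `w_s`, and for orthonormal `w_s` the
span of the `|w_s⟩⟨w_t|` is exactly `L(V)`: an `M` with range in `V` vanishing on `V^⊥` equals
`Q M Q` for the projector `Q = Σ_t |w_t⟩⟨w_t|`.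
-/

open Matrix

section OuterProducts

variable {R : Type*} [CommRing R] [StarRing R] {n ι κ : Type*}

def outerProductSpan (v : ι → n → R) : Submodule R (Matrix n n R) :=
  Submodule.span R (Set.range fun p : ι × ι => vecMulVec (v p.1) (star (v p.2)))

theorem vecMulVec_star_mem_outerProductSpan {v : ι → n → R} {x y : n → R}
    (hx : x ∈ Submodule.span R (Set.range v)) (hy : y ∈ Submodule.span R (Set.range v)) :
    vecMulVec x (star y) ∈ outerProductSpan v := by
  induction hx, hy using Submodule.span_induction₂ with
  | mem_mem x y hx hy =>
    obtain ⟨⟨s, rfl⟩, ⟨t, rfl⟩⟩ := And.intro hx hy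
    exact Submodule.subset_span ⟨(s, t), rfl⟩
  | zero_left => simp
  | zero_right => simp
  | add_left x y z _ _ _ hxz hyz => rw [add_vecMulVec]; exact add_mem hxz hyz
  | add_right x y z _ _ _ hxy hxz => rw [star_add, vecMulVec_add]; exact add_mem hxy hxz
  | smul_left r x y _ _ h => rw [smul_vecMulVec]; exact Submodule.smul_mem _ r h
  | smul_right r x y _ _ h => rw [star_smul, vecMulVec_smul]; exact Submodule.smul_mem _ _ h

theorem outerProductSpan_mono {v : ι → n → R} {w : κ → n → R}
    (h : Submodule.span R (Set.range v) ≤ Submodule.span R (Set.range w)) :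
    outerProductSpan v ≤ outerProductSpan w :=
  Submodule.span_le.2 <| by
    rintro _ ⟨⟨s, t⟩, rfl⟩
    exact vecMulVec_star_mem_outerProductSpan (h (Submodule.subset_span ⟨s, rfl⟩))
      (h (Submodule.subset_span ⟨t, rfl⟩))

theorem outerProductSpan_congr {v : ι → n → R} {w : κ → n → R}
    (h : Submodule.span R (Set.range v) = Submodule.span R (Set.range w)) :
    outerProductSpan v = outerProductSpan w :=
  le_antisymm (outerProductSpan_mono h.le) (outerProductSpan_mono h.ge)

theorem star_mem_outerProductSpan (v : ι → n → R) {M : Matrix n n R}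
    (hM : M ∈ outerProductSpan v) : star M ∈ outerProductSpan v := by
  induction hM using Submodule.span_induction with
  | mem x hx =>
    obtain ⟨⟨s, t⟩, rfl⟩ := hx
    rw [star_eq_conjTranspose, conjTranspose_vecMulVec, star_star]
    exact Submodule.subset_span ⟨(t, s), rfl⟩
  | zero => simp
  | add x y _ _ hx hy => rw [star_add]; exact add_mem hx hy
  | smul r x _ h => rw [star_smul]; exact Submodule.smul_mem _ _ h

variable [Fintype n]

theorem mul_mem_outerProductSpan (v : ι → n → R) (M N : Matrix n n R)
    (hM : M ∈ outerProductSpan v) (hN : N ∈ outerProductSpan v) : M * N ∈ outerProductSpan v := by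
  induction hM, hN using Submodule.span_induction₂ with
  | mem_mem x y hx hy =>
    obtain ⟨⟨⟨s, t⟩, rfl⟩, ⟨⟨s', t'⟩, rfl⟩⟩ := And.intro hx hy
    rw [vecMulVec_mul_vecMulVec, vecMulVec_smul]
    exact Submodule.smul_mem _ _ (Submodule.subset_span ⟨(s, t'), rfl⟩)
  | zero_left => simp
  | zero_right => simp
  | add_left x y z _ _ _ hxz hyz => rw [add_mul]; exact add_mem hxz hyz
  | add_right x y z _ _ _ hxy hxz => rw [mul_add]; exact add_mem hxy hxz
  | smul_left r x y _ _ h => rw [smul_mul_assoc]; exact Submodule.smul_mem _ r h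
  | smul_right r x y _ _ h => rw [mul_smul_comm]; exact Submodule.smul_mem _ r h

def outerProductAlgebra (v : ι → n → R) : NonUnitalStarSubalgebra R (Matrix n n R) :=
  { (outerProductSpan v).toNonUnitalSubalgebra (mul_mem_outerProductSpan v) with
    star_mem' := star_mem_outerProductSpan v }

theorem coe_outerProductAlgebra (v : ι → n → R) :
    (outerProductAlgebra v : Set (Matrix n n R)) = outerProductSpan v :=
  rfl

theorem adjoin_outerProducts (v : ι → n → R) :
    NonUnitalStarAlgebra.adjoin R (Set.range fun p : ι × ι => vecMulVec (v p.1) (star (v p.2)))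
      = outerProductAlgebra v :=
  le_antisymm (NonUnitalStarAlgebra.adjoin_le Submodule.subset_span) fun _ hM =>
    Submodule.span_le (p := (NonUnitalStarAlgebra.adjoin R _).toSubmodule) |>.2
      (NonUnitalStarAlgebra.subset_adjoin R _) hM

end OuterProducts

section Orthonormal

variable {R : Type*} [CommRing R] [StarRing R] {n ι : Type*} [Fintype n] [Fintype ι]
  {w : ι → n → R}

theorem sum_outerProduct_mulVec (x : n → R) :
    (∑ t, vecMulVec (w t) (star (w t))) *ᵥ x = ∑ t, (star (w t) ⬝ᵥ x) • w t := by
  simp only [sum_mulVec, vecMulVec_mulVec, op_smul_eq_smul]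

def operatorsOnSpan (w : ι → n → R) : Set (Matrix n n R) :=
  {M | (∀ x, M *ᵥ x ∈ Submodule.span R (Set.range w)) ∧
    ∀ x, (∀ s, star (w s) ⬝ᵥ x = 0) → M *ᵥ x = 0}

theorem outerProductSpan_subset_operatorsOnSpan :
    (outerProductSpan w : Set (Matrix n n R)) ⊆ operatorsOnSpan w := by
  intro M hM
  obtain ⟨c, rfl⟩ := (Submodule.mem_span_range_iff_exists_fun R).1 hM
  simp only [operatorsOnSpan, Set.mem_ofPred_eq, sum_mulVec, smul_mulVec, vecMulVec_mulVec,
    op_smul_eq_smul]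
  refine ⟨fun x => sum_mem fun p _ => ?_, fun x hx => by simp [hx]⟩
  exact Submodule.smul_mem _ _ (Submodule.smul_mem _ _ (Submodule.subset_span ⟨p.1, rfl⟩))

variable [DecidableEq ι] (hw : ∀ s t, star (w s) ⬝ᵥ w t = if s = t then 1 else 0)
include hw

theorem sum_outerProduct_mulVec_of_mem_span {y : n → R}
    (hy : y ∈ Submodule.span R (Set.range w)) : (∑ t, vecMulVec (w t) (star (w t))) *ᵥ y = y := by
  refine LinearMap.eqOn_span' (f := (∑ t, vecMulVec (w t) (star (w t))).mulVecLin)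
    (g := LinearMap.id) ?_ hy
  rintro _ ⟨s, rfl⟩
  simp only [LinearMap.id_apply, mulVecLin_apply]
  rw [sum_outerProduct_mulVec]
  simp [hw]

theorem dotProduct_sub_sum_outerProduct_mulVec (s : ι) (x : n → R) :
    star (w s) ⬝ᵥ (x - (∑ t, vecMulVec (w t) (star (w t))) *ᵥ x) = 0 := by
  rw [sum_outerProduct_mulVec, dotProduct_sub, dotProduct_sum]
  simp [hw]

theorem coe_outerProductSpan_of_orthonormal :
    (outerProductSpan w : Set (Matrix n n R)) = operatorsOnSpan w := by
  refine outerProductSpan_subset_operatorsOnSpan.antisymm fun M ⟨hrange, hker⟩ => ?_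
  set Q := ∑ t, vecMulVec (w t) (star (w t))
  have hQM : Q * M = M := ext_iff_mulVec.2 fun x => by
    rw [← mulVec_mulVec, sum_outerProduct_mulVec_of_mem_span hw (hrange x)]
  have hMQ : M * Q = M := ext_iff_mulVec.2 fun x => by
    rw [← mulVec_mulVec, eq_comm, ← sub_eq_zero, ← mulVec_sub]
    exact hker _ fun s => dotProduct_sub_sum_outerProduct_mulVec hw s x
  rw [SetLike.mem_coe, ← hMQ, ← hQM, Finset.sum_mul, Finset.sum_mul]
  refine sum_mem fun s _ => ?_
  rw [Finset.mul_sum]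
  refine sum_mem fun t _ => ?_
  rw [vecMulVec_mul, vecMulVec_mul_vecMulVec, vecMulVec_smul]
  exact Submodule.smul_mem _ _ (Submodule.subset_span ⟨(s, t), rfl⟩)

end Orthonormal

section Schmidt

variable {K : Type*} [Field K] [StarRing K] {a b ι : Type*} [Fintype a] [Fintype ι]
  [DecidableEq ι] {c : ι → K} {u : ι → a → K} {w : ι → b → K} {Ψ : a → b → K}

theorem sum_star_smul_eq_of_schmidt (hu : ∀ s t, star (u s) ⬝ᵥ u t = if s = t then 1 else 0)
    (hΨ : ∀ i k, Ψ i k = ∑ s, c s * u s i * w s k) (s : ι) :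
    ∑ i, star (u s i) • Ψ i = c s • w s := by
  ext k
  have hcontract : ∀ r, ∑ i, star (u s i) * (c r * u r i * w r k) =
      (star (u s) ⬝ᵥ u r) * (c r * w r k) := fun r => by
    simp only [dotProduct, Pi.star_apply, Finset.sum_mul]
    exact Finset.sum_congr rfl fun i _ => by ring
  simp only [Finset.sum_apply, Pi.smul_apply, smul_eq_mul, hΨ, Finset.mul_sum]
  rw [Finset.sum_comm]
  simp [hcontract, hu]

theorem span_range_eq_of_schmidt (hc : ∀ s, c s ≠ 0)
    (hu : ∀ s t, star (u s) ⬝ᵥ u t = if s = t then 1 else 0)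
    (hΨ : ∀ i k, Ψ i k = ∑ s, c s * u s i * w s k) :
    Submodule.span K (Set.range Ψ) = Submodule.span K (Set.range w) := by
  refine le_antisymm (Submodule.span_le.2 ?_) (Submodule.span_le.2 ?_)
  · rintro _ ⟨i, rfl⟩
    have hrow : Ψ i = ∑ s, (c s * u s i) • w s := by
      ext k
      simp [hΨ]
    rw [hrow]
    exact sum_mem fun s _ => Submodule.smul_mem _ _ (Submodule.subset_span ⟨s, rfl⟩)
  · rintro _ ⟨s, rfl⟩
    rw [← inv_smul_smul₀ (hc s) (w s), ← sum_star_smul_eq_of_schmidt hu hΨ]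
    exact Submodule.smul_mem _ _ <|
      sum_mem fun i _ => Submodule.smul_mem _ _ (Submodule.subset_span ⟨i, rfl⟩)

end Schmidt

theorem induced_algebra_of_rank_one_projector_general
    {a b : Type*} [Fintype a] [Fintype b]
    {ρ : ℕ} (α : Fin ρ → ℝ) (hα : ∀ s, α s ≠ 0)
    (u : Fin ρ → (a → ℂ)) (w : Fin ρ → (b → ℂ))
    (hu : ∀ s t, star (u s) ⬝ᵥ u t = if s = t then 1 else 0)
    (hw : ∀ s t, star (w s) ⬝ᵥ w t = if s = t then 1 else 0)
    (ψ : a × b → ℂ)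
    (hψ : ∀ i k, ψ (i, k) = ∑ s, (α s : ℂ) * u s i * w s k)
    (P : Matrix (a × b) (a × b) ℂ)
    (hP : P = vecMulVec ψ (star ψ)) :
    ((NonUnitalStarAlgebra.adjoin ℂ
        {M : Matrix b b ℂ | ∃ i j : a, M = Matrix.of fun k l => P (i, k) (j, l)} :
          NonUnitalStarSubalgebra ℂ (Matrix b b ℂ)) : Set (Matrix b b ℂ))
      = {M : Matrix b b ℂ |
          (∀ x : b → ℂ, M.mulVec x ∈ Submodule.span ℂ (Set.range w)) ∧
          (∀ x : b → ℂ, (∀ s, star (w s) ⬝ᵥ x = 0) → M.mulVec x = 0)} := by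
  have hblocks : {M : Matrix b b ℂ | ∃ i j : a, M = Matrix.of fun k l => P (i, k) (j, l)} =
      Set.range fun p : a × a => vecMulVec (Function.curry ψ p.1) (star (Function.curry ψ p.2)) := by
    subst hP
    ext M
    constructor
    · rintro ⟨i, j, rfl⟩
      exact ⟨(i, j), rfl⟩
    · rintro ⟨⟨i, j⟩, rfl⟩
      exact ⟨i, j, rfl⟩
  have hrows : Submodule.span ℂ (Set.range (Function.curry ψ)) = Submodule.span ℂ (Set.range w) :=
    span_range_eq_of_schmidt (fun s => Complex.ofReal_ne_zero.2 (hα s)) hu hψ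
  rw [hblocks, adjoin_outerProducts, coe_outerProductAlgebra, outerProductSpan_congr hrows]
  exact coe_outerProductSpan_of_orthonormal hw

/-- for a rank-1 projector `P = |ψ⟩⟨ψ|` on `A ⊗ B` with Schmidt decomposition
`|ψ⟩ = Σ_s α_s |u_s⟩|w_s⟩` (all `α_s ≠ 0`), the C*-algebra generated by the blocks
`⟨i|_A P |j⟩_A` equals the full matrix algebra `L(span{|w_s⟩})`, realized as the set of
operators whose range lies in `span{w_s}` and which vanish on its orthogonal complement. -/
theorem induced_algebra_of_rank_one_projector
    {a b : Type*} [Fintype a] [DecidableEq a] [Fintype b] [DecidableEq b]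
    {ρ : ℕ} (α : Fin ρ → ℝ) (hα : ∀ s, α s ≠ 0)
    (u : Fin ρ → (a → ℂ)) (w : Fin ρ → (b → ℂ))
    (hu : ∀ s t, star (u s) ⬝ᵥ u t = if s = t then 1 else 0)
    (hw : ∀ s t, star (w s) ⬝ᵥ w t = if s = t then 1 else 0)
    (ψ : a × b → ℂ)
    (hψ : ∀ i k, ψ (i, k) = ∑ s, (α s : ℂ) * u s i * w s k)
    (hψnorm : star ψ ⬝ᵥ ψ = 1)
    (P : Matrix (a × b) (a × b) ℂ)
    (hP : P = vecMulVec ψ (star ψ)) :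
    ((NonUnitalStarAlgebra.adjoin ℂ
        {M : Matrix b b ℂ | ∃ i j : a, M = Matrix.of fun k l => P (i, k) (j, l)} :
          NonUnitalStarSubalgebra ℂ (Matrix b b ℂ)) : Set (Matrix b b ℂ))
      = {M : Matrix b b ℂ |
          (∀ x : b → ℂ, M.mulVec x ∈ Submodule.span ℂ (Set.range w)) ∧
          (∀ x : b → ℂ, (∀ s, star (w s) ⬝ᵥ x = 0) → M.mulVec x = 0)} :=
  induced_algebra_of_rank_one_projector_general α hα u w hu hw ψ hψ P hP
end

section
/- Let h be a Hermitian operator on A ⊗ B with two decompositions h = Σ_{ij} h_{ij} ⊗ g_{ij} = Σ_{ij} ĥ_{ij} ⊗ ĝ_{ij} where {g_{ij}} and {ĝ_{ij}} are each linearly independent families of operators on B. Then the unital *-algebras on A generated by {h_{ij}} and by {ĥ_{ij}} coincide. -/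
/-!
Slicing the second tensor factor with a functional `φ` on `Matrix b b ℂ` that is dual to `G' s`
(it sends `G' s` to `1` and every other `G' t` to `0`) turns `∑ t, A t ⊗ₖ G t = ∑ t, A' t ⊗ₖ G' t`
into `∑ t, φ (G t) • A t = A' s`. So every `A' s` lies in the linear span of the `A t`, hence in
the star algebra they generate; by symmetry the two generated star algebras coincide.
-/

open Matrix
open scoped Kronecker

theorem LinearIndependent.exists_dual_apply_eq_single {K V ι : Type*} [Field K] [AddCommGroup V]
    [Module K V] [DecidableEq ι] {v : ι → V} (hv : LinearIndependent K v) (i : ι) :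
    ∃ φ : Module.Dual K V, ∀ j, φ (v j) = Pi.single (M := fun _ => K) i 1 j := by
  obtain ⟨φ, hφ⟩ := LinearMap.exists_extend ((Module.Basis.span hv).coord i)
  refine ⟨φ, fun j => ?_⟩
  have hj := LinearMap.congr_fun hφ ((Module.Basis.span hv) j)
  simp only [LinearMap.comp_apply, Module.Basis.coord_apply, Module.Basis.span_apply] at hj
  simpa [Finsupp.single_apply, Pi.single_apply, eq_comm] using hj

theorem StarAlgebra.adjoin_le_adjoin_of_subset_span {R A : Type*} [CommSemiring R] [StarRing R]
    [Semiring A] [StarRing A] [Algebra R A] [StarModule R A] {s t : Set A}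
    (hst : s ⊆ Submodule.span R t) : adjoin R s ≤ adjoin R t :=
  adjoin_le fun _ hx =>
    (Submodule.span_le (p := (adjoin R t).toSubalgebra.toSubmodule)).mpr (subset_adjoin R t)
      (hst hx)

namespace Matrix

def rightSliceMap {R : Type*} [CommSemiring R] {a b c d : Type*}
    (φ : Module.Dual R (Matrix b d R)) : Matrix (a × b) (c × d) R →ₗ[R] Matrix a c R :=
  φ.mapMatrix ∘ₗ (compLinearEquiv a c b d R R).symm.toLinearMap

@[simp]
theorem rightSliceMap_kronecker {R : Type*} [CommSemiring R] {a b c d : Type*}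
    (φ : Module.Dual R (Matrix b d R)) (X : Matrix a c R) (Y : Matrix b d R) :
    rightSliceMap φ (X ⊗ₖ Y) = φ Y • X := by
  have hblocks : (comp a c b d R).symm (X ⊗ₖ Y) = X.map (· • Y) := by
    ext i j k l
    simp [kroneckerMap_apply]
  ext i j
  simp [rightSliceMap, hblocks, mul_comm]

theorem mem_span_range_of_sum_kronecker_eq {K : Type*} [Field K] {a b c d ι κ : Type*}
    [Fintype ι] [Fintype κ] {A : ι → Matrix a c K} {G : ι → Matrix b d K}
    {A' : κ → Matrix a c K} {G' : κ → Matrix b d K} (hG' : LinearIndependent K G')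
    (heq : ∑ t, A t ⊗ₖ G t = ∑ t, A' t ⊗ₖ G' t) (s : κ) :
    A' s ∈ Submodule.span K (Set.range A) := by
  classical
  obtain ⟨φ, hφ⟩ := hG'.exists_dual_apply_eq_single s
  have hslice := congrArg (rightSliceMap φ) heq
  simp only [map_sum, rightSliceMap_kronecker, hφ, Pi.single_apply, ite_smul, one_smul,
    zero_smul, Finset.sum_ite_eq', Finset.mem_univ, if_true] at hslice
  rw [← hslice]
  exact Submodule.sum_mem _ fun t _ => Submodule.smul_mem _ _ (Submodule.subset_span ⟨t, rfl⟩)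

end Matrix

theorem induced_algebra_well_defined_general
    {a b : Type*} [Fintype a] [DecidableEq a]
    {ι κ : Type*} [Fintype ι] [Fintype κ]
    (h : Matrix (a × b) (a × b) ℂ)
    (A : ι → Matrix a a ℂ) (G : ι → Matrix b b ℂ)
    (A' : κ → Matrix a a ℂ) (G' : κ → Matrix b b ℂ)
    (hG : LinearIndependent ℂ G) (hG' : LinearIndependent ℂ G')
    (hdec : h = ∑ t, A t ⊗ₖ G t)
    (hdec' : h = ∑ t, A' t ⊗ₖ G' t) :
    StarAlgebra.adjoin ℂ (Set.range A) = StarAlgebra.adjoin ℂ (Set.range A') := by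
  have heq : ∑ t, A t ⊗ₖ G t = ∑ t, A' t ⊗ₖ G' t := hdec.symm.trans hdec'
  refine le_antisymm ?_ ?_ <;> apply StarAlgebra.adjoin_le_adjoin_of_subset_span <;>
    rintro _ ⟨s, rfl⟩
  · exact mem_span_range_of_sum_kronecker_eq hG heq.symm s
  · exact mem_span_range_of_sum_kronecker_eq hG' heq s

/-- the induced algebra is independent of the decomposition: if
`h = Σ_t A_t ⊗ G_t = Σ_t A'_t ⊗ G'_t` with each of the families `{G_t}`, `{G'_t}`
linearly independent, then the unital *-algebras generated by `{A_t}` and `{A'_t}`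
coincide. -/
theorem induced_algebra_well_defined
    {a b : Type*} [Fintype a] [DecidableEq a] [Fintype b] [DecidableEq b]
    {ι κ : Type*} [Fintype ι] [Fintype κ]
    (h : Matrix (a × b) (a × b) ℂ) (hherm : h.IsHermitian)
    (A : ι → Matrix a a ℂ) (G : ι → Matrix b b ℂ)
    (A' : κ → Matrix a a ℂ) (G' : κ → Matrix b b ℂ)
    (hG : LinearIndependent ℂ G) (hG' : LinearIndependent ℂ G')
    (hdec : h = ∑ t, A t ⊗ₖ G t)
    (hdec' : h = ∑ t, A' t ⊗ₖ G' t) :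
    StarAlgebra.adjoin ℂ (Set.range A) = StarAlgebra.adjoin ℂ (Set.range A') :=
  induced_algebra_well_defined_general h A G A' G' hG hG' hdec hdec'
end

section
/- Let P be a rank-1 projector on A ⊗ B and Q a projector on B ⊗ C commuting with P ⊗ I_C (as operators on A ⊗ B ⊗ C). Then there is an orthogonal decomposition B = B_P ⊕ B_Q such that the induced algebra of P on B equals the full algebra L(B_P) (extended by zero on B_Q), and the induced algebra of Q on B restricted to B_P consists only of scalar multiples of the identity. -/
/-!
Write `P = v v*` (a Hermitian idempotent of rank one). Its blocks `P_{ij}` on `B` are then the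
rank-one operators `u_i u_j*`, where `u_i` are the slices of `v`, and `B_P = span {u_i}`. Sums and
products of such operators fill out exactly the matrices supported on `B_P`, by expanding along an
orthonormal basis of `B_P`. Commutation of `P ⊗ 1` with `1 ⊗ Q` says that every block `Q_{nn'}`
commutes with every `u_i u_j*`; applied to a nonzero `u_j` this forces a single scalar `z` with
`Q_{nn'} u_i = z u_i` for all `i`. Matrices acting as a scalar on `B_P` form a subalgebra, which
contains the star-closed generating set `{Q_{nn'}}` since `Q` is Hermitian.
-/

open Matrix InnerProductSpace

namespace Matrix

theorem exists_eq_vecMulVec_of_rank_le_one {K m n : Type*} [Field K] [Fintype n]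
    (M : Matrix m n K) (h : M.rank ≤ 1) : ∃ (w : m → K) (c : n → K), M = vecMulVec w c := by
  classical
  obtain ⟨w, hw⟩ := finrank_le_one_iff.mp h
  choose c hc using fun j => hw ⟨_, LinearMap.mem_range_self M.mulVecLin (Pi.single j 1)⟩
  refine ⟨w, c, ext fun i j => ?_⟩
  simpa [vecMulVec_apply, mul_comm] using (congrFun (congrArg Subtype.val (hc j)) i).symm

open scoped ComplexOrder in
theorem IsHermitian.exists_eq_vecMulVec_star {𝕜 m : Type*} [RCLike 𝕜] [Fintype m]
    {P : Matrix m m 𝕜} (hP : P.IsHermitian) (hPP : IsIdempotentElem P) (hrank : P.rank ≤ 1) :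
    ∃ v : m → 𝕜, P = vecMulVec v (star v) := by
  obtain ⟨w, c, rfl⟩ := exists_eq_vecMulVec_of_rank_le_one P hrank
  obtain ⟨r, hr, hrc⟩ := RCLike.nonneg_iff_exists_ofReal.mp (dotProduct_self_star_nonneg c)
  have hPPh : vecMulVec w c = vecMulVec w c * (vecMulVec w c)ᴴ := by rw [hP.eq, hPP.eq]
  refine ⟨(√r : 𝕜) • w, ?_⟩
  rw [hPPh, conjTranspose_vecMulVec, vecMulVec_mul_vecMulVec, ← hrc]
  ext i j
  have hsq : (√r : 𝕜) * √r = r := by rw [← RCLike.ofReal_mul, Real.mul_self_sqrt hr]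
  simp only [vecMulVec_apply, Pi.smul_apply, Pi.star_apply, star_smul, smul_eq_mul,
    RCLike.star_def, RCLike.conj_ofReal]
  linear_combination (w i * (starRingEnd 𝕜) (w j)) * hsq.symm

theorem commute_blocks_of_commute_tensor {R a b c : Type*} [Semiring R] [Fintype a]
    [DecidableEq a] [Fintype b] [Fintype c] [DecidableEq c]
    {P : Matrix (a × b) (a × b) R} {Q : Matrix (b × c) (b × c) R}
    (h : Commute
      (of fun x y : a × b × c =>
        P (x.1, x.2.1) (y.1, y.2.1) * (if x.2.2 = y.2.2 then (1 : R) else 0))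
      (of fun x y : a × b × c =>
        (if x.1 = y.1 then (1 : R) else 0) * Q (x.2.1, x.2.2) (y.2.1, y.2.2)))
    (i j : a) (n n' : c) :
    Commute (of fun k l => P (i, k) (j, l)) (of fun k l => Q (k, n) (l, n')) := by
  ext k l
  simpa [mul_apply, Fintype.sum_prod_type] using congrFun (congrFun h.eq (i, k, n)) (j, l, n')

end Matrix

section Adjoint

variable {𝕜 E F : Type*} [RCLike 𝕜] [NormedAddCommGroup E] [InnerProductSpace 𝕜 E]
  [NormedAddCommGroup F] [InnerProductSpace 𝕜 F] [FiniteDimensional 𝕜 E]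

theorem LinearMap.range_adjoint_le_of_orthogonal_le_ker [FiniteDimensional 𝕜 F]
    {T : E →ₗ[𝕜] F} {V : Submodule 𝕜 E} (h : Vᗮ ≤ ker T) : range (adjoint T) ≤ V := by
  rintro _ ⟨x, rfl⟩
  rw [← Submodule.orthogonal_orthogonal V]
  intro w hw
  rw [adjoint_inner_right, h hw, inner_zero_left]

theorem LinearMap.orthogonal_le_ker_adjoint_of_range_le [FiniteDimensional 𝕜 F]
    {T : E →ₗ[𝕜] F} {V : Submodule 𝕜 F} (h : range T ≤ V) : Vᗮ ≤ ker (adjoint T) := by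
  intro x hx
  refine ext_inner_right 𝕜 fun y => ?_
  rw [adjoint_inner_left, inner_zero_left]
  exact Submodule.inner_left_of_mem_orthogonal (h ⟨y, rfl⟩) hx

theorem LinearMap.eq_sum_rankOne_of_orthogonal_le_ker {ι : Type*} [Fintype ι]
    {V : Submodule 𝕜 E} (b : OrthonormalBasis ι 𝕜 V) {T : E →ₗ[𝕜] F} (h : Vᗮ ≤ ker T) :
    T = ∑ i, (rankOne 𝕜 (T (b i)) (b i : E) : E →ₗ[𝕜] F) := by
  ext z
  have hz : T z = T (V.starProjection z) := by
    rw [← sub_eq_zero, ← map_sub]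
    exact h (V.sub_starProjection_mem_orthogonal z)
  rw [hz, b.starProjection_eq_sum_rankOne]
  simp

end Adjoint

namespace Matrix

variable {𝕜 n : Type*} [RCLike 𝕜]

theorem vecMulVec_mem_of_mem_span {S : Type*} [SetLike S (Matrix n n 𝕜)]
    [AddSubmonoidClass S (Matrix n n 𝕜)] [SMulMemClass S 𝕜 (Matrix n n 𝕜)] {A : S}
    {ι : Type*} {u : ι → EuclideanSpace 𝕜 n} {w : n → 𝕜} (h : ∀ i, vecMulVec (u i) w ∈ A)
    {x : EuclideanSpace 𝕜 n} (hx : x ∈ Submodule.span 𝕜 (Set.range u)) :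
    vecMulVec x w ∈ A := by
  induction hx using Submodule.span_induction with
  | mem x hx => obtain ⟨i, rfl⟩ := hx; exact h i
  | zero => simp
  | add x y _ _ hx hy => simpa [add_vecMulVec] using add_mem hx hy
  | smul c x _ hx => simpa [smul_vecMulVec] using SMulMemClass.smul_mem c hx

theorem vecMulVec_star_mem_of_mem_span {S : Type*} [SetLike S (Matrix n n 𝕜)]
    [AddSubmonoidClass S (Matrix n n 𝕜)] [SMulMemClass S 𝕜 (Matrix n n 𝕜)]
    [StarMemClass S (Matrix n n 𝕜)] {A : S} {ι : Type*} {u : ι → EuclideanSpace 𝕜 n}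
    (h : ∀ i j, vecMulVec (u i) (star (u j)) ∈ A) {x y : EuclideanSpace 𝕜 n}
    (hx : x ∈ Submodule.span 𝕜 (Set.range u)) (hy : y ∈ Submodule.span 𝕜 (Set.range u)) :
    vecMulVec x (star y) ∈ A := by
  refine vecMulVec_mem_of_mem_span (fun i => ?_) hx
  have hyi : vecMulVec y (star (u i)) ∈ A := vecMulVec_mem_of_mem_span (fun j => h j i) hy
  simpa [star_eq_conjTranspose, conjTranspose_vecMulVec] using star_mem hyi

open scoped ComplexOrder in
theorem mulVec_eq_smul_of_commute_vecMulVec [Fintype n] {N : Matrix n n 𝕜} {x y : n → 𝕜}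
    (hy : y ≠ 0) (h : Commute N (vecMulVec x (star y))) :
    N *ᵥ x = ((star y ⬝ᵥ N *ᵥ y) / (star y ⬝ᵥ y)) • x := by
  have hyy : star y ⬝ᵥ y ≠ 0 := dotProduct_star_self_eq_zero.not.mpr hy
  have hNy := congrArg (· *ᵥ y) h.eq
  simp only [mul_vecMulVec, vecMulVec_mulVec, ← mulVec_mulVec, op_smul_eq_smul] at hNy
  rw [div_eq_inv_mul, mul_smul, ← hNy, inv_smul_smul₀ hyy]

theorem exists_forall_mulVec_eq_smul_of_commute [Fintype n] {ι : Type*} {N : Matrix n n 𝕜}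
    {u : ι → n → 𝕜} (h : ∀ i j, Commute N (vecMulVec (u i) (star (u j)))) :
    ∃ z : 𝕜, ∀ i, N *ᵥ u i = z • u i := by
  by_cases! hu : ∃ j, u j ≠ 0
  · obtain ⟨j, hj⟩ := hu
    exact ⟨_, fun i => mulVec_eq_smul_of_commute_vecMulVec hj (h i j)⟩
  · exact ⟨0, fun i => by simp [hu i]⟩

variable [Fintype n] [DecidableEq n]

theorem toEuclideanLin_vecMulVec_star (x y : EuclideanSpace 𝕜 n) :
    toEuclideanLin (vecMulVec x (star y)) = (rankOne 𝕜 x y : _ →ₗ[𝕜] _) :=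
  ((LinearEquiv.symm_apply_eq _).mp (symm_toEuclideanLin_rankOne x y)).symm

/-- The full algebra `L(V)`, extended by zero on `Vᗮ`. -/
def cornerSubalgebra (V : Submodule 𝕜 (EuclideanSpace 𝕜 n)) :
    NonUnitalStarSubalgebra 𝕜 (Matrix n n 𝕜) where
  carrier := {M | LinearMap.range (toEuclideanLin M) ≤ V ∧ Vᗮ ≤ LinearMap.ker (toEuclideanLin M)}
  zero_mem' := by simp
  add_mem' := by
    rintro M N ⟨hM, hM'⟩ ⟨hN, hN'⟩
    rw [Set.mem_ofPred_eq, map_add]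
    exact ⟨(LinearMap.range_add_le _ _).trans (sup_le hM hN),
      fun x hx => by simp [LinearMap.mem_ker.mp (hM' hx), LinearMap.mem_ker.mp (hN' hx)]⟩
  mul_mem' := by
    rintro M N ⟨hM, -⟩ ⟨-, hN'⟩
    rw [Set.mem_ofPred_eq, toLpLin_mul_same]
    exact ⟨(LinearMap.range_comp_le_range _ _).trans hM, hN'.trans (LinearMap.ker_le_ker_comp _ _)⟩
  smul_mem' := by
    rintro c M ⟨hM, hM'⟩
    rw [Set.mem_ofPred_eq, map_smul]
    exact ⟨(LinearMap.range_smul_le_range _ _).trans hM,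
      fun x hx => by simp [LinearMap.mem_ker.mp (hM' hx)]⟩
  star_mem' := by
    rintro M ⟨hM, hM'⟩
    rw [Set.mem_ofPred_eq, star_eq_conjTranspose, toEuclideanLin_conjTranspose_eq_adjoint]
    exact ⟨LinearMap.range_adjoint_le_of_orthogonal_le_ker hM',
      LinearMap.orthogonal_le_ker_adjoint_of_range_le hM⟩

theorem vecMulVec_star_mem_cornerSubalgebra {V : Submodule 𝕜 (EuclideanSpace 𝕜 n)}
    {x y : EuclideanSpace 𝕜 n} (hx : x ∈ V) (hy : y ∈ V) :
    vecMulVec x (star y) ∈ cornerSubalgebra V := by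
  refine ⟨?_, fun z hz => ?_⟩ <;> rw [toEuclideanLin_vecMulVec_star]
  · rintro _ ⟨z, rfl⟩
    exact V.smul_mem _ hx
  · simp [Submodule.inner_right_of_mem_orthogonal hy hz]

theorem adjoin_vecMulVec_star_eq_cornerSubalgebra {ι : Type*} (u : ι → EuclideanSpace 𝕜 n) :
    NonUnitalStarAlgebra.adjoin 𝕜 {M | ∃ i j, M = vecMulVec (u i) (star (u j))} =
      cornerSubalgebra (Submodule.span 𝕜 (Set.range u)) := by
  set V := Submodule.span 𝕜 (Set.range u)
  refine le_antisymm (NonUnitalStarAlgebra.adjoin_le ?_) fun M hM => ?_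
  · rintro _ ⟨i, j, rfl⟩
    exact vecMulVec_star_mem_cornerSubalgebra (Submodule.subset_span ⟨i, rfl⟩)
      (Submodule.subset_span ⟨j, rfl⟩)
  let e := stdOrthonormalBasis 𝕜 V
  have hM_eq : M = ∑ α, vecMulVec (toEuclideanLin M (e α)) (star (e α : EuclideanSpace 𝕜 n)) := by
    apply toEuclideanLin.injective
    simp_rw [map_sum, toEuclideanLin_vecMulVec_star]
    exact LinearMap.eq_sum_rankOne_of_orthogonal_le_ker e hM.2
  rw [hM_eq]
  refine sum_mem fun α _ => vecMulVec_star_mem_of_mem_span (fun i j => ?_) (hM.1 ⟨_, rfl⟩) (e α).2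
  exact NonUnitalStarAlgebra.subset_adjoin _ _ ⟨i, j, rfl⟩

def scalarOnSubalgebra (V : Submodule 𝕜 (EuclideanSpace 𝕜 n)) : Subalgebra 𝕜 (Matrix n n 𝕜) where
  carrier := {M | ∃ z : 𝕜, ∀ x ∈ V, toEuclideanLin M x = z • x}
  mul_mem' := by
    rintro M N ⟨z, hM⟩ ⟨w, hN⟩
    refine ⟨z * w, fun x hx => ?_⟩
    rw [toLpLin_mul_same, LinearMap.comp_apply, hN x hx, map_smul, hM x hx, smul_smul, mul_comm]
  add_mem' := by
    rintro M N ⟨z, hM⟩ ⟨w, hN⟩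
    exact ⟨z + w, fun x hx => by rw [map_add, LinearMap.add_apply, hM x hx, hN x hx, add_smul]⟩
  algebraMap_mem' r := ⟨r, fun x _ => by simp [Algebra.algebraMap_eq_smul_one]⟩

theorem mem_scalarOnSubalgebra_span_of_commute {ι : Type*} {N : Matrix n n 𝕜}
    {u : ι → EuclideanSpace 𝕜 n} (h : ∀ i j, Commute N (vecMulVec (u i) (star (u j)))) :
    N ∈ scalarOnSubalgebra (Submodule.span 𝕜 (Set.range u)) := by
  obtain ⟨z, hz⟩ := exists_forall_mulVec_eq_smul_of_commute h
  refine ⟨z, fun x hx => Module.End.mem_eigenspace_iff.mp <| Submodule.span_le.mpr ?_ hx⟩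
  rintro _ ⟨i, rfl⟩
  exact Module.End.mem_eigenspace_iff.mpr (congrArg (WithLp.toLp 2) (hz i))

theorem IsHermitian.adjoin_blocks_le_scalarOnSubalgebra {c : Type*}
    {Q : Matrix (n × c) (n × c) 𝕜} (hQ : Q.IsHermitian) {V : Submodule 𝕜 (EuclideanSpace 𝕜 n)}
    (h : ∀ m m', (of fun k l => Q (k, m) (l, m')) ∈ scalarOnSubalgebra V) :
    (StarAlgebra.adjoin 𝕜 {M | ∃ m m', M = of fun k l => Q (k, m) (l, m')}).toSubalgebra ≤
      scalarOnSubalgebra V := by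
  refine Algebra.adjoin_le (Set.union_subset ?_ ?_)
  · rintro _ ⟨m, m', rfl⟩
    exact h m m'
  · rintro M ⟨m, m', hM⟩
    have hQ' : (of fun k l => Q (k, m) (l, m'))ᴴ = of fun k l => Q (k, m') (l, m) := by
      ext k l
      exact congrFun (congrFun hQ (k, m')) (l, m)
    rw [← star_star M, hM, star_eq_conjTranspose, hQ']
    exact h m' m

end Matrix

theorem rank_one_induced_algebra_structure_general
    {a b c : Type*} [Fintype a] [DecidableEq a] [Fintype b] [DecidableEq b]
    [Fintype c] [DecidableEq c]
    (P : Matrix (a × b) (a × b) ℂ) (Q : Matrix (b × c) (b × c) ℂ)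
    (hPh : P.IsHermitian) (hPi : P * P = P) (hPrank : P.rank = 1)
    (hQh : Q.IsHermitian)
    (hcomm :
      (Matrix.of fun x y : a × b × c =>
          P (x.1, x.2.1) (y.1, y.2.1) * (if x.2.2 = y.2.2 then (1 : ℂ) else 0)) *
        (Matrix.of fun x y : a × b × c =>
          (if x.1 = y.1 then (1 : ℂ) else 0) * Q (x.2.1, x.2.2) (y.2.1, y.2.2))
      = (Matrix.of fun x y : a × b × c =>
          (if x.1 = y.1 then (1 : ℂ) else 0) * Q (x.2.1, x.2.2) (y.2.1, y.2.2)) *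
        (Matrix.of fun x y : a × b × c =>
          P (x.1, x.2.1) (y.1, y.2.1) * (if x.2.2 = y.2.2 then (1 : ℂ) else 0))) :
    ∃ BP : Submodule ℂ (EuclideanSpace ℂ b),
      ((NonUnitalStarAlgebra.adjoin ℂ
          {M : Matrix b b ℂ | ∃ i j : a, M = Matrix.of fun k l => P (i, k) (j, l)} :
            NonUnitalStarSubalgebra ℂ (Matrix b b ℂ)) : Set (Matrix b b ℂ))
        = {M : Matrix b b ℂ |
            LinearMap.range (Matrix.toEuclideanLin M) ≤ BP ∧
            BPᗮ ≤ LinearMap.ker (Matrix.toEuclideanLin M)} ∧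
      (∀ M ∈ StarAlgebra.adjoin ℂ
          {M : Matrix b b ℂ | ∃ n n' : c, M = Matrix.of fun k l => Q (k, n) (l, n')},
        ∃ z : ℂ, ∀ x ∈ BP,
          (Submodule.orthogonalProjectionOnto BP (Matrix.toEuclideanLin M x) : EuclideanSpace ℂ b)
            = z • x) := by
  obtain ⟨v, hv⟩ := hPh.exists_eq_vecMulVec_star hPi hPrank.le
  let u : a → EuclideanSpace ℂ b := fun i => WithLp.toLp 2 fun k => v (i, k)
  have hPblock : ∀ i j, (of fun k l => P (i, k) (j, l)) = vecMulVec (u i) (star (u j)) := by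
    intro i j
    ext k l
    simp [hv, u, vecMulVec_apply]
  have hQblock : ∀ n n', (of fun k l => Q (k, n) (l, n')) ∈
      scalarOnSubalgebra (Submodule.span ℂ (Set.range u)) := fun n n' =>
    mem_scalarOnSubalgebra_span_of_commute fun i j =>
      hPblock i j ▸ (commute_blocks_of_commute_tensor hcomm i j n n').symm
  refine ⟨Submodule.span ℂ (Set.range u), ?_, fun M hM => ?_⟩
  · simp_rw [hPblock, adjoin_vecMulVec_star_eq_cornerSubalgebra]
    rfl
  · obtain ⟨z, hz⟩ := hQh.adjoin_blocks_le_scalarOnSubalgebra hQblock hM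
    refine ⟨z, fun x hx => ?_⟩
    rw [hz x hx]
    exact Submodule.starProjection_eq_self_iff.mpr (Submodule.smul_mem _ z hx)

/-- for a rank-1 projector `P` on `A ⊗ B` commuting (on `A ⊗ B ⊗ C`) with a
projector `Q` on `B ⊗ C`, there is an orthogonal decomposition `B = B_P ⊕ B_Pᗮ` such that
the induced algebra of `P` on `B` is the full algebra on `B_P` (extended by zero on
`B_Pᗮ`), while the induced algebra of `Q` on `B`, compressed to `B_P`, consists only of
scalar multiples of the identity on `B_P`. -/
theorem rank_one_induced_algebra_structure
    {a b c : Type*} [Fintype a] [DecidableEq a] [Fintype b] [DecidableEq b]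
    [Fintype c] [DecidableEq c]
    (P : Matrix (a × b) (a × b) ℂ) (Q : Matrix (b × c) (b × c) ℂ)
    (hPh : P.IsHermitian) (hPi : P * P = P) (hPrank : P.rank = 1)
    (hQh : Q.IsHermitian) (hQi : Q * Q = Q)
    (hcomm :
      (Matrix.of fun x y : a × b × c =>
          P (x.1, x.2.1) (y.1, y.2.1) * (if x.2.2 = y.2.2 then (1 : ℂ) else 0)) *
        (Matrix.of fun x y : a × b × c =>
          (if x.1 = y.1 then (1 : ℂ) else 0) * Q (x.2.1, x.2.2) (y.2.1, y.2.2))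
      = (Matrix.of fun x y : a × b × c =>
          (if x.1 = y.1 then (1 : ℂ) else 0) * Q (x.2.1, x.2.2) (y.2.1, y.2.2)) *
        (Matrix.of fun x y : a × b × c =>
          P (x.1, x.2.1) (y.1, y.2.1) * (if x.2.2 = y.2.2 then (1 : ℂ) else 0))) :
    ∃ BP : Submodule ℂ (EuclideanSpace ℂ b),
      ((NonUnitalStarAlgebra.adjoin ℂ
          {M : Matrix b b ℂ | ∃ i j : a, M = Matrix.of fun k l => P (i, k) (j, l)} :
            NonUnitalStarSubalgebra ℂ (Matrix b b ℂ)) : Set (Matrix b b ℂ))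
        = {M : Matrix b b ℂ |
            LinearMap.range (Matrix.toEuclideanLin M) ≤ BP ∧
            BPᗮ ≤ LinearMap.ker (Matrix.toEuclideanLin M)} ∧
      (∀ M ∈ StarAlgebra.adjoin ℂ
          {M : Matrix b b ℂ | ∃ n n' : c, M = Matrix.of fun k l => Q (k, n) (l, n')},
        ∃ z : ℂ, ∀ x ∈ BP,
          (Submodule.orthogonalProjectionOnto BP (Matrix.toEuclideanLin M x) : EuclideanSpace ℂ b)
            = z • x) :=
  rank_one_induced_algebra_structure_general P Q hPh hPi hPrank hQh hcomm
end

section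
/- Let P on A ⊗ B and Q on B ⊗ C be commuting rank-1 orthogonal projectors (acting as identity on the remaining factors of A ⊗ B ⊗ C). Then exactly one of the following holds: (singular case) there is a unit vector |ψ⟩ ∈ B and rank-1 projectors P̃ on A, Q̃ on C with P = P̃ ⊗ |ψ⟩⟨ψ| and Q = |ψ⟩⟨ψ| ⊗ Q̃; or (reducing case) there exists a Hermitian projector Π on B such that (I_A ⊗ Π) P (I_A ⊗ Π) = P and (Π ⊗ I_C) Q (Π ⊗ I_C) = 0. -/
/-!
Write `P = |v⟩⟨v|` and `Q = |w⟩⟨w|`. Read entrywise and contracted with `w`, the commutation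
relation becomes `v(i,j) T(k,l) = w(j,l) (T Tᴴ)(k,i)` for the partial inner product
`T = ⟨v|w⟩_B`. If `T = 0`, every row `v(i,·)` is orthogonal to every column `w(·,l)`, so the
orthogonal projection onto the span of the rows fixes `P` and annihilates `Q`. Otherwise some
diagonal entry of `T Tᴴ` is nonzero and the relation splits `v = x ⊗ ψ` and `w = ψ ⊗ z`.
The cases are exclusive since no compression can both fix and annihilate `|ψ⟩⟨ψ|`.
-/

open Matrix
open scoped Kronecker ComplexOrder

namespace Matrix

section Kronecker

variable {R : Type*} {l m n p : Type*}

def kroneckerVec [Mul R] (x : m → R) (y : n → R) : m × n → R := fun i => x i.1 * y i.2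

@[simp]
lemma kroneckerVec_apply [Mul R] (x : m → R) (y : n → R) (i : m × n) :
    kroneckerVec x y i = x i.1 * y i.2 := rfl

lemma star_kroneckerVec [CommSemiring R] [StarRing R] (x : m → R) (y : n → R) :
    star (kroneckerVec x y) = kroneckerVec (star x) (star y) :=
  funext fun _ => star_mul' _ _

lemma kroneckerVec_dotProduct [CommSemiring R] [Fintype m] [Fintype n] (x x' : m → R)
    (y y' : n → R) : kroneckerVec x y ⬝ᵥ kroneckerVec x' y' = (x ⬝ᵥ x') * (y ⬝ᵥ y') := by
  simp only [dotProduct, Fintype.sum_prod_type, kroneckerVec_apply, Finset.sum_mul_sum]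
  exact Finset.sum_congr rfl fun _ _ => Finset.sum_congr rfl fun _ _ => by ring

lemma vecMulVec_kroneckerVec [CommSemiring R] (x : l → R) (x' : m → R) (y : n → R)
    (y' : p → R) :
    vecMulVec (kroneckerVec x y) (kroneckerVec x' y') = vecMulVec x x' ⊗ₖ vecMulVec y y' := by
  ext i j
  simp only [vecMulVec_apply, kroneckerVec_apply, kroneckerMap_apply]
  ring

lemma one_kronecker_mulVec_apply [CommSemiring R] [Fintype m] [DecidableEq m] [Fintype n]
    (E : Matrix n n R) (v : m × n → R) (i : m) (j : n) :
    ((1 : Matrix m m R) ⊗ₖ E *ᵥ v) (i, j) = (E *ᵥ fun j' => v (i, j')) j := by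
  simpa [mul_apply, mulVec, dotProduct] using
    (congrFun (vec_mul_eq_mulVec E (of fun j i => v (i, j))) (i, j)).symm

lemma kronecker_one_mulVec_apply [CommSemiring R] [Fintype m] [Fintype n] [DecidableEq n]
    (E : Matrix m m R) (w : m × n → R) (i : m) (k : n) :
    (E ⊗ₖ (1 : Matrix n n R) *ᵥ w) (i, k) = (E *ᵥ fun i' => w (i', k)) i := by
  simpa [mul_apply, mulVec, dotProduct, mul_comm] using
    (congrFun (kronecker_mulVec_vec 1 (of fun k i => w (i, k)) E) (i, k))

lemma kronecker_right_injective [Ring R] [NoZeroDivisors R] {A : Matrix l m R}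
    (hA : A ≠ 0) : Function.Injective (A ⊗ₖ · : Matrix n p R → _) := by
  intro B B' h
  obtain ⟨i, i', hi⟩ : ∃ i i', A i i' ≠ 0 := by simpa [← Matrix.ext_iff] using hA
  ext j j'
  exact mul_left_cancel₀ hi congr($h (i, j) (i', j'))

lemma kronecker_left_injective [Ring R] [NoZeroDivisors R] {B : Matrix n p R}
    (hB : B ≠ 0) : Function.Injective (· ⊗ₖ B : Matrix l m R → _) := by
  intro A A' h
  obtain ⟨j, j', hj⟩ : ∃ j j', B j j' ≠ 0 := by simpa [← Matrix.ext_iff] using hB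
  ext i i'
  exact mul_right_cancel₀ hj congr($h (i, j) (i', j'))

lemma eq_zero_of_kronecker_compression [CommRing R] [NoZeroDivisors R] [Fintype l]
    [DecidableEq l] [Fintype m] [Fintype n] [DecidableEq n] {A : Matrix l l R}
    {B : Matrix n n R} {E M : Matrix m m R} (hA : A ≠ 0) (hB : B ≠ 0)
    (hfix : (1 ⊗ₖ E) * (A ⊗ₖ M) * (1 ⊗ₖ E) = A ⊗ₖ M)
    (hkill : (E ⊗ₖ 1) * (M ⊗ₖ B) * (E ⊗ₖ 1) = 0) : M = 0 := by
  rw [← mul_kronecker_mul, ← mul_kronecker_mul, Matrix.one_mul, Matrix.mul_one] at hfix hkill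
  rw [← kronecker_right_injective hA hfix]
  exact kronecker_left_injective hB (hkill.trans (zero_kronecker B).symm)

lemma exists_kroneckerVec_of_mul_eq_mul [Field R] {v : l × m → R} {w : m × n → R}
    {T : l → n → R} {H : l → l → R} (hG : ∀ i j k p, v (i, j) * T k p = w (j, p) * H k i)
    {k₀ : l} {p₀ : n} (hT : T k₀ p₀ ≠ 0) (hH : H k₀ k₀ ≠ 0) :
    ∃ (x : l → R) (ψ : m → R) (z : n → R), v = kroneckerVec x ψ ∧ w = kroneckerVec ψ z := by
  have hv (i : l) (j : m) : v (i, j) = H k₀ i / T k₀ p₀ * w (j, p₀) := by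
    rw [div_mul_eq_mul_div, eq_div_iff hT, mul_comm (H k₀ i)]
    exact hG i j k₀ p₀
  refine ⟨fun i => H k₀ i / T k₀ p₀, fun j => w (j, p₀), fun p => T k₀ p / T k₀ p₀,
    funext fun ⟨i, j⟩ => ?_, funext fun ⟨j, p⟩ => ?_⟩
  · rw [hv, kroneckerVec_apply]
  · have := hG k₀ j k₀ p
    rw [hv] at this
    rw [kroneckerVec_apply]
    field_simp at this ⊢
    exact this.symm

end Kronecker

section RCLike

variable {𝕜 : Type*} [RCLike 𝕜] {l m n : Type*}

lemma exists_real_smul_dotProduct_eq_one [Fintype n] {u : n → 𝕜} (hu : u ≠ 0) :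
    ∃ r : ℝ, r ≠ 0 ∧ star ((r : 𝕜) • u) ⬝ᵥ ((r : 𝕜) • u) = 1 := by
  obtain ⟨t, ht, hut⟩ := RCLike.pos_iff_exists_ofReal.mp (dotProduct_star_self_pos_iff.mpr hu)
  refine ⟨(√t)⁻¹, by positivity, ?_⟩
  rw [star_smul, smul_dotProduct, dotProduct_smul, ← hut]
  simp only [RCLike.star_def, RCLike.conj_ofReal, smul_eq_mul, ← RCLike.ofReal_mul]
  rw [← mul_assoc, ← mul_inv, Real.mul_self_sqrt ht.le, inv_mul_cancel₀ ht.ne', RCLike.ofReal_one]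

lemma isHermitian_vecMulVec_star (v : n → 𝕜) : (vecMulVec v (star v)).IsHermitian := by
  rw [IsHermitian, conjTranspose_vecMulVec, star_star]

lemma vecMulVec_star_mul_self [Fintype n] {v : n → 𝕜} (hv : star v ⬝ᵥ v = 1) :
    vecMulVec v (star v) * vecMulVec v (star v) = vecMulVec v (star v) := by
  rw [vecMulVec_mul_vecMulVec, hv, one_smul]

lemma rank_vecMulVec_star [Fintype n] [DecidableEq n] {v : n → 𝕜} (hv : star v ⬝ᵥ v = 1) :
    (vecMulVec v (star v)).rank = 1 := by
  refine le_antisymm (rank_vecMulVec_le _ _) (Nat.one_le_iff_ne_zero.mpr fun h => ?_)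
  have hv0 : v ≠ 0 := by rintro rfl; simp at hv
  have hmem : v ∈ LinearMap.range (vecMulVec v (star v)).mulVecLin :=
    ⟨v, by rw [mulVecLin_apply, vecMulVec_mulVec, hv, MulOpposite.op_one, one_smul]⟩
  rw [rank, Submodule.finrank_eq_zero] at h
  exact hv0 (by simpa [h] using hmem)

lemma exists_eq_vecMulVec_star_of_rank_eq_one [Fintype n] [DecidableEq n] {M : Matrix n n 𝕜}
    (hh : M.IsHermitian) (hi : M * M = M) (hr : M.rank = 1) :
    ∃ v : n → 𝕜, star v ⬝ᵥ v = 1 ∧ M = vecMulVec v (star v) := by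
  obtain ⟨⟨u, y, rfl⟩, hu, hspan⟩ := finrank_eq_one_iff'.mp hr
  obtain ⟨r, hr, hv⟩ := exists_real_smul_dotProduct_eq_one fun h => hu (Subtype.ext h)
  set v := (r : 𝕜) • M *ᵥ y
  replace hv : star v ⬝ᵥ v = 1 := hv
  have hMv : M *ᵥ v = v := by rw [mulVec_smul, mulVec_mulVec, hi]
  refine ⟨v, hv, ext_iff_mulVec.mpr fun x => ?_⟩
  obtain ⟨c, hc⟩ := hspan ⟨M *ᵥ x, x, rfl⟩
  have hx : M *ᵥ x = (c / r) • v := by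
    have hc : c • M *ᵥ y = M *ᵥ x := congrArg Subtype.val hc
    rw [← hc, smul_smul, div_mul_cancel₀ _ (RCLike.ofReal_ne_zero.mpr hr)]
  have hc' : star v ⬝ᵥ x = c / r :=
    calc star v ⬝ᵥ x = star v ⬝ᵥ M *ᵥ x := by
          rw [dotProduct_mulVec, ← hh.eq, ← star_mulVec, hMv]
      _ = c / r := by rw [hx, dotProduct_smul, hv, smul_eq_mul, mul_one]
  rw [vecMulVec_mulVec, hc', hx, op_smul_eq_smul]

lemma IsHermitian.kronecker {A : Matrix l l 𝕜} {B : Matrix m m 𝕜} (hA : A.IsHermitian)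
    (hB : B.IsHermitian) : (A ⊗ₖ B).IsHermitian := by
  rw [IsHermitian, conjTranspose_kronecker, hA.eq, hB.eq]

lemma IsHermitian.mul_vecMulVec_star_mul [Fintype n] {H : Matrix n n 𝕜} (hH : H.IsHermitian)
    (u : n → 𝕜) : H * vecMulVec u (star u) * H = vecMulVec (H *ᵥ u) (star (H *ᵥ u)) := by
  rw [mul_vecMulVec, vecMulVec_mul, star_mulVec, hH.eq]

lemma exists_isHermitian_projection [Fintype n] [DecidableEq n] (S : Set (n → 𝕜)) :
    ∃ E : Matrix n n 𝕜, E.IsHermitian ∧ E * E = E ∧ (∀ u ∈ S, E *ᵥ u = u) ∧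
      ∀ y, (∀ u ∈ S, star u ⬝ᵥ y = 0) → E *ᵥ y = 0 := by
  let K := Submodule.span 𝕜 (WithLp.toLp 2 '' S)
  have hK := isStarProjection_starProjection (U := K)
  let E := (toEuclideanCLM (𝕜 := 𝕜) (n := n)).symm K.starProjection
  have hEK : toEuclideanCLM (𝕜 := 𝕜) (n := n) E = K.starProjection :=
    StarAlgEquiv.apply_symm_apply _ _
  have hE (y : n → 𝕜) : E *ᵥ y = WithLp.ofLp (K.starProjection (WithLp.toLp 2 y)) := by
    rw [← hEK, ofLp_toEuclideanCLM]
  refine ⟨E, ?_, ?_, fun u hu => ?_, fun y hy => ?_⟩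
  · apply EquivLike.injective (toEuclideanCLM (𝕜 := 𝕜) (n := n))
    rw [← star_eq_conjTranspose, map_star (toEuclideanCLM (𝕜 := 𝕜) (n := n)) E, hEK,
      hK.isSelfAdjoint.star_eq]
  · apply EquivLike.injective (toEuclideanCLM (𝕜 := 𝕜) (n := n))
    rw [map_mul (toEuclideanCLM (𝕜 := 𝕜) (n := n)) E E, hEK, hK.isIdempotentElem.eq]
  · rw [hE, K.starProjection_eq_self_iff.mpr (Submodule.subset_span ⟨u, hu, rfl⟩)]
  · have hyK : Submodule.span 𝕜 {WithLp.toLp 2 y} ⟂ K := by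
      refine (Submodule.isOrtho_span.mpr ?_).symm
      rintro _ ⟨u, hu, rfl⟩ _ rfl
      rw [EuclideanSpace.inner_toLp_toLp, dotProduct_comm, hy u hu]
    rw [hE, K.starProjection_apply_eq_zero_iff.mpr (hyK (Submodule.mem_span_singleton_self _))]
    rfl

lemma exists_unit_kroneckerVec [Fintype l] [Fintype m] [Fintype n] {x : l → 𝕜} {ψ : m → 𝕜}
    {z : n → 𝕜} (hv : star (kroneckerVec x ψ) ⬝ᵥ kroneckerVec x ψ = 1)
    (hw : star (kroneckerVec ψ z) ⬝ᵥ kroneckerVec ψ z = 1) :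
    ∃ (x' : l → 𝕜) (ψ' : m → 𝕜) (z' : n → 𝕜), star x' ⬝ᵥ x' = 1 ∧ star ψ' ⬝ᵥ ψ' = 1 ∧
      star z' ⬝ᵥ z' = 1 ∧ kroneckerVec x ψ = kroneckerVec x' ψ' ∧
      kroneckerVec ψ z = kroneckerVec ψ' z' := by
  obtain ⟨r, hr, hψ⟩ := exists_real_smul_dotProduct_eq_one (u := ψ) <| by
    rintro rfl
    simp [star_kroneckerVec, kroneckerVec_dotProduct] at hv
  have hr : (r : 𝕜) ≠ 0 := RCLike.ofReal_ne_zero.mpr hr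
  have hxψ : kroneckerVec x ψ = kroneckerVec ((r : 𝕜)⁻¹ • x) ((r : 𝕜) • ψ) := by
    ext; simp only [kroneckerVec_apply, Pi.smul_apply, smul_eq_mul]; field_simp
  have hψz : kroneckerVec ψ z = kroneckerVec ((r : 𝕜) • ψ) ((r : 𝕜)⁻¹ • z) := by
    ext; simp only [kroneckerVec_apply, Pi.smul_apply, smul_eq_mul]; field_simp
  rw [hxψ, star_kroneckerVec, kroneckerVec_dotProduct, hψ, mul_one] at hv
  rw [hψz, star_kroneckerVec, kroneckerVec_dotProduct, hψ, one_mul] at hw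
  exact ⟨_, _, _, hv, hψ, hw, hxψ, hψz⟩

variable {a b c : Type*}

/-- `P ⊗ I_C` on `A ⊗ B ⊗ C`. -/
def extendRight [DecidableEq c] (P : Matrix (a × b) (a × b) 𝕜) :
    Matrix (a × b × c) (a × b × c) 𝕜 :=
  of fun x y => P (x.1, x.2.1) (y.1, y.2.1) * (if x.2.2 = y.2.2 then 1 else 0)

/-- `I_A ⊗ Q` on `A ⊗ B ⊗ C`. -/
def extendLeft [DecidableEq a] (Q : Matrix (b × c) (b × c) 𝕜) :
    Matrix (a × b × c) (a × b × c) 𝕜 :=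
  of fun x y => (if x.1 = y.1 then 1 else 0) * Q (x.2.1, x.2.2) (y.2.1, y.2.2)

/-- `⟨v|w⟩_B ∈ A* ⊗ C`. -/
def partialInner [Fintype b] (v : a × b → 𝕜) (w : b × c → 𝕜) (i : a) (k : c) : 𝕜 :=
  ∑ j, star (v (i, j)) * w (j, k)

section Commuting

variable [Fintype a] [DecidableEq a] [Fintype b] [Fintype c] [DecidableEq c]
  {v : a × b → 𝕜} {w : b × c → 𝕜}

lemma commute_extend_vecMulVec_apply
    (hcomm : Commute (extendRight (c := c) (vecMulVec v (star v)))
      (extendLeft (a := a) (vecMulVec w (star w)))) (i k : a) (j j' : b) (l l' : c) :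
    v (i, j) * partialInner v w k l * star (w (j', l')) =
      star (v (k, j')) * w (j, l) * star (partialInner v w i l') := by
  have h := congrFun (congrFun hcomm.eq (i, j, l)) (k, j', l')
  simp only [extendRight, extendLeft, vecMulVec_apply, Pi.star_apply, mul_ite, mul_one, mul_zero,
    Prod.mk.eta, ite_mul, one_mul, zero_mul, mul_apply, of_apply, Fintype.sum_prod_type,
    Finset.sum_ite_irrel, Finset.sum_ite_eq, Finset.mem_univ, ↓reduceIte, Finset.sum_const_zero,
    Finset.sum_ite_eq'] at h
  simp only [partialInner, Finset.mul_sum, Finset.sum_mul, star_sum, star_mul', star_star]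
  calc _ = _ := Finset.sum_congr rfl fun _ _ => by ring
    _ = _ := h
    _ = _ := Finset.sum_congr rfl fun _ _ => by ring

lemma mul_partialInner_eq (hw : star w ⬝ᵥ w = 1)
    (hcomm : Commute (extendRight (c := c) (vecMulVec v (star v)))
      (extendLeft (a := a) (vecMulVec w (star w)))) (i : a) (j : b) (k : a) (l : c) :
    v (i, j) * partialInner v w k l =
      w (j, l) * (partialInner v w k ⬝ᵥ star (partialInner v w i)) := by
  calc v (i, j) * partialInner v w k l
      = ∑ q : b × c, v (i, j) * partialInner v w k l * star (w q) * w q := by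
        simp only [mul_assoc, ← Finset.mul_sum]
        rw [show ∑ q, star (w q) * w q = 1 from hw, mul_one]
    _ = ∑ q : b × c, star (v (k, q.1)) * w (j, l) * star (partialInner v w i q.2) * w q :=
        Finset.sum_congr rfl fun q _ => by rw [commute_extend_vecMulVec_apply hcomm]
    _ = w (j, l) * (partialInner v w k ⬝ᵥ star (partialInner v w i)) := by
        rw [Fintype.sum_prod_type, Finset.sum_comm]
        simp only [dotProduct, partialInner, Pi.star_apply, Finset.mul_sum, Finset.sum_mul]
        exact Finset.sum_congr rfl fun _ _ => Finset.sum_congr rfl fun _ _ => by ring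

variable [DecidableEq b]

lemma exists_reducing_projection_of_partialInner_eq_zero (hT : partialInner v w = 0) :
    ∃ E : Matrix b b 𝕜, E.IsHermitian ∧ E * E = E ∧
      ((1 : Matrix a a 𝕜) ⊗ₖ E) * vecMulVec v (star v) * ((1 : Matrix a a 𝕜) ⊗ₖ E) =
        vecMulVec v (star v) ∧
      (E ⊗ₖ (1 : Matrix c c 𝕜)) * vecMulVec w (star w) * (E ⊗ₖ (1 : Matrix c c 𝕜)) = 0 := by
  obtain ⟨E, hE, hEE, hfix, hkill⟩ :=
    exists_isHermitian_projection (Set.range fun i j => v (i, j))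
  have hfix' : (1 : Matrix a a 𝕜) ⊗ₖ E *ᵥ v = v := funext fun ⟨i, j⟩ => by
    rw [one_kronecker_mulVec_apply, hfix _ ⟨i, rfl⟩]
  have hkill' : E ⊗ₖ (1 : Matrix c c 𝕜) *ᵥ w = 0 := funext fun ⟨j, k⟩ => by
    rw [kronecker_one_mulVec_apply, hkill _ ?_, Pi.zero_apply, Pi.zero_apply]
    rintro _ ⟨i, rfl⟩
    exact congrFun (congrFun hT i) k
  refine ⟨E, hE, hEE, ?_, ?_⟩
  · rw [(isHermitian_one.kronecker hE).mul_vecMulVec_star_mul, hfix']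
  · rw [(hE.kronecker isHermitian_one).mul_vecMulVec_star_mul, hkill', zero_vecMulVec]

end Commuting

end RCLike

end Matrix

/-- two commuting rank-1 projectors `P` on `A ⊗ B` and `Q` on `B ⊗ C`
commute in exactly one of two ways: the singular way, where both factor through the same
state `|ψ⟩` on `B`, or the reducing way, where some projector `Π` on `B` preserves `P`
and annihilates `Q`. -/
theorem rank_one_commutation_dichotomy
    {a b c : Type*} [Fintype a] [DecidableEq a] [Fintype b] [DecidableEq b]
    [Fintype c] [DecidableEq c]
    (P : Matrix (a × b) (a × b) ℂ) (Q : Matrix (b × c) (b × c) ℂ)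
    (hPh : P.IsHermitian) (hPi : P * P = P) (hPrank : P.rank = 1)
    (hQh : Q.IsHermitian) (hQi : Q * Q = Q) (hQrank : Q.rank = 1)
    (hcomm :
      (Matrix.of fun x y : a × b × c =>
          P (x.1, x.2.1) (y.1, y.2.1) * (if x.2.2 = y.2.2 then (1 : ℂ) else 0)) *
        (Matrix.of fun x y : a × b × c =>
          (if x.1 = y.1 then (1 : ℂ) else 0) * Q (x.2.1, x.2.2) (y.2.1, y.2.2))
      = (Matrix.of fun x y : a × b × c =>
          (if x.1 = y.1 then (1 : ℂ) else 0) * Q (x.2.1, x.2.2) (y.2.1, y.2.2)) *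
        (Matrix.of fun x y : a × b × c =>
          P (x.1, x.2.1) (y.1, y.2.1) * (if x.2.2 = y.2.2 then (1 : ℂ) else 0))) :
    Xor'
      -- singular commutation
      (∃ (ψ : b → ℂ) (Pt : Matrix a a ℂ) (Qt : Matrix c c ℂ),
        star ψ ⬝ᵥ ψ = 1 ∧
        Pt.IsHermitian ∧ Pt * Pt = Pt ∧ Pt.rank = 1 ∧
        Qt.IsHermitian ∧ Qt * Qt = Qt ∧ Qt.rank = 1 ∧
        P = Pt ⊗ₖ vecMulVec ψ (star ψ) ∧ Q = vecMulVec ψ (star ψ) ⊗ₖ Qt)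
      -- reducing commutation
      (∃ Pr : Matrix b b ℂ, Pr.IsHermitian ∧ Pr * Pr = Pr ∧
        ((1 : Matrix a a ℂ) ⊗ₖ Pr) * P * ((1 : Matrix a a ℂ) ⊗ₖ Pr) = P ∧
        (Pr ⊗ₖ (1 : Matrix c c ℂ)) * Q * (Pr ⊗ₖ (1 : Matrix c c ℂ)) = 0) := by
  refine (xor_iff_or_and_not_and _ _).mpr ⟨?_, ?_⟩
  · obtain ⟨v, hv, rfl⟩ := exists_eq_vecMulVec_star_of_rank_eq_one hPh hPi hPrank
    obtain ⟨w, hw, rfl⟩ := exists_eq_vecMulVec_star_of_rank_eq_one hQh hQi hQrank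
    by_cases hT : partialInner v w = 0
    · exact Or.inr (exists_reducing_projection_of_partialInner_eq_zero hT)
    obtain ⟨k, p, hkp⟩ : ∃ k p, partialInner v w k p ≠ 0 := by
      simpa [funext_iff] using hT
    obtain ⟨x, ψ, z, rfl, rfl⟩ := exists_kroneckerVec_of_mul_eq_mul
      (H := fun k i => partialInner v w k ⬝ᵥ star (partialInner v w i))
      (mul_partialInner_eq hw hcomm) hkp
      (dotProduct_self_star_eq_zero.not.mpr (Function.ne_iff.mpr ⟨p, hkp⟩))
    obtain ⟨x, ψ, z, hx, hψ, hz, hxψ, hψz⟩ := exists_unit_kroneckerVec hv hw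
    refine Or.inl ⟨ψ, _, _, hψ, isHermitian_vecMulVec_star x, vecMulVec_star_mul_self hx,
      rank_vecMulVec_star hx, isHermitian_vecMulVec_star z, vecMulVec_star_mul_self hz,
      rank_vecMulVec_star hz, ?_, ?_⟩
    · rw [hxψ, star_kroneckerVec, vecMulVec_kroneckerVec]
    · rw [hψz, star_kroneckerVec, vecMulVec_kroneckerVec]
  · rintro ⟨⟨ψ, Pt, Qt, hψ, -, -, hPt, -, -, hQt, rfl, rfl⟩, E, -, -, hfix, hkill⟩
    have hψψ := eq_zero_of_kronecker_compression (by rintro rfl; simp at hPt)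
      (by rintro rfl; simp at hQt) hfix hkill
    simpa [hψψ] using rank_vecMulVec_star hψ
end

section
/- Let P̃ and Q̃ be Hermitian projectors on a finite-dimensional Hilbert space, with Jordan decomposition P̃Q̃ = Σ_b η_b |p_b⟩⟨q_b| where, within each two-dimensional Jordan block b, P̃ projects onto |p_b⟩ and Q̃ projects onto |q_b⟩ with ⟨p_b|q_b⟩ = √η_b ≥ 0. If a Hermitian operator h commutes with both P̃ and Q̃, then h commutes with Σ_{b : η_b > 0} |p_b⟩⟨p_b|. -/
/-!
`h` commutes with `P̃Q̃(P̃Q̃)ᴴ = P̃Q̃Q̃P̃ = Σ_b η_b² |p_b⟩⟨p_b|`. As the `|p_b⟩⟨p_b|` are mutually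
orthogonal projections, `X * g` applied to this operator multiplies each weight `t = η_b²` by
`g(t)`; taking for `g` an interpolant of `t ↦ t⁻¹` on the weights sends nonzero weights to `1` and
zero weights to `0`, so `Σ_{η_b > 0} |p_b⟩⟨p_b|` is a polynomial in `P̃Q̃Q̃P̃`.
-/

open Matrix Polynomial

section Biorthogonal

variable {𝕜 n ι : Type*} [Fintype n] [Fintype ι] [DecidableEq ι]

theorem sum_smul_vecMulVec_mul_sum_smul_vecMulVec [CommSemiring 𝕜] {u v w z : ι → n → 𝕜}
    (hvw : ∀ b b', v b ⬝ᵥ w b' = if b = b' then 1 else 0) (x y : ι → 𝕜) :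
    (∑ b, x b • vecMulVec (u b) (v b)) * ∑ b, y b • vecMulVec (w b) (z b)
      = ∑ b, (x b * y b) • vecMulVec (u b) (z b) := by
  simp_rw [Finset.sum_mul_sum, smul_mul_smul_comm, vecMulVec_mul_vecMulVec, hvw, ite_smul,
    one_smul, zero_smul, apply_ite (vecMulVec _), vecMulVec_zero, smul_ite, smul_zero,
    Finset.sum_ite_eq, Finset.mem_univ, if_true]

variable [Field 𝕜] [DecidableEq n] {u v : ι → n → 𝕜}

theorem sum_smul_vecMulVec_mul_aeval (huv : ∀ b b', v b ⬝ᵥ u b' = if b = b' then 1 else 0)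
    (c : ι → 𝕜) (f : 𝕜[X]) :
    (∑ b, c b • vecMulVec (u b) (v b)) * aeval (∑ b, c b • vecMulVec (u b) (v b)) f
      = ∑ b, (c b * f.eval (c b)) • vecMulVec (u b) (v b) := by
  induction f using Polynomial.induction_on with
  | C a =>
    simp_rw [aeval_C, Algebra.algebraMap_eq_smul_one, mul_smul_comm, mul_one, Finset.smul_sum,
      smul_smul, eval_C, mul_comm a]
  | add f g hf hg =>
    simp_rw [map_add, mul_add, hf, hg, eval_add, mul_add, add_smul, Finset.sum_add_distrib]
  | monomial k a ih =>
    rw [pow_succ, ← mul_assoc, map_mul, aeval_X, ← mul_assoc, ih,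
      sum_smul_vecMulVec_mul_sum_smul_vecMulVec huv]
    simp_rw [eval_mul, eval_X, mul_assoc]

theorem commute_sum_filter_vecMulVec_of_commute [DecidableEq 𝕜]
    (huv : ∀ b b', v b ⬝ᵥ u b' = if b = b' then 1 else 0) (c : ι → 𝕜) {h : Matrix n n 𝕜}
    (hc : Commute h (∑ b, c b • vecMulVec (u b) (v b))) :
    Commute h (∑ b ∈ Finset.univ.filter fun b => c b ≠ 0, vecMulVec (u b) (v b)) := by
  obtain ⟨g, hg⟩ : ∃ g : 𝕜[X], ∀ b, g.eval (c b) = (c b)⁻¹ :=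
    (exists_eval_eq_iff c fun b => (c b)⁻¹).mpr fun b b' hbb' => by rw [hbb']
  -- `c * c⁻¹` is the indicator of `c ≠ 0`, thanks to `0⁻¹ = 0`
  have hsum : ∑ b ∈ Finset.univ.filter fun b => c b ≠ 0, vecMulVec (u b) (v b)
      = ∑ b, (c b * g.eval (c b)) • vecMulVec (u b) (v b) := by
    rw [Finset.sum_filter]
    refine Finset.sum_congr rfl fun b _ => ?_
    by_cases hb : c b = 0 <;> simp [hb, hg]
  rw [hsum, ← sum_smul_vecMulVec_mul_aeval huv]
  exact hc.mul_right
    (Algebra.commute_of_mem_adjoin_singleton_of_commute (aeval_mem_adjoin_singleton 𝕜 _) hc)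

end Biorthogonal

theorem jordan_positive_part_commutes_general {d : Type*} [Fintype d]
    {ι : Type*} [Fintype ι] [DecidableEq ι]
    (P Q : Matrix d d ℂ)
    (hPh : P.IsHermitian)
    (hQh : Q.IsHermitian)
    (η : ι → ℝ) (hη0 : ∀ b, 0 ≤ η b)
    (p q : ι → d → ℂ)
    (hpon : ∀ b b', star (p b) ⬝ᵥ p b' = if b = b' then 1 else 0)
    (hqon : ∀ b b', star (q b) ⬝ᵥ q b' = if b = b' then 1 else 0)
    (hPQ : P * Q = ∑ b, (η b : ℂ) • vecMulVec (p b) (star (q b)))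
    (h : Matrix d d ℂ)
    (hhP : h * P = P * h) (hhQ : h * Q = Q * h) :
    h * (∑ b ∈ Finset.univ.filter fun b => 0 < η b, vecMulVec (p b) (star (p b)))
      = (∑ b ∈ Finset.univ.filter fun b => 0 < η b, vecMulVec (p b) (star (p b))) * h := by
  classical
  have hQP : Q * P = ∑ b, (η b : ℂ) • vecMulVec (q b) (star (p b)) := by
    rw [← hQh.eq, ← hPh.eq, ← conjTranspose_mul, hPQ]
    simp [conjTranspose_sum]
  have hPQQP : P * Q * (Q * P) = ∑ b, ((η b : ℂ) * η b) • vecMulVec (p b) (star (p b)) := by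
    rw [hPQ, hQP]
    exact sum_smul_vecMulVec_mul_sum_smul_vecMulVec hqon _ _
  have hcomm : Commute h (P * Q * (Q * P)) :=
    (Commute.mul_right hhP hhQ).mul_right (Commute.mul_right hhQ hhP)
  have hpos : (Finset.univ.filter fun b => (η b : ℂ) * η b ≠ 0)
      = Finset.univ.filter fun b => 0 < η b :=
    Finset.filter_congr fun b _ => by simp [(hη0 b).lt_iff_ne']
  have key := commute_sum_filter_vecMulVec_of_commute hpon _ (hPQQP ▸ hcomm)
  rwa [hpos] at key

/-- in the Jordan-block setting for a pair of projectors `P̃, Q̃`, any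
Hermitian `h` commuting with both `P̃` and `Q̃` commutes with
`Σ_{b : η_b > 0} |p_b⟩⟨p_b|`. -/
theorem jordan_positive_part_commutes {d : Type*} [Fintype d] [DecidableEq d]
    {ι : Type*} [Fintype ι] [DecidableEq ι]
    (P Q : Matrix d d ℂ)
    (hPh : P.IsHermitian) (hPi : P * P = P)
    (hQh : Q.IsHermitian) (hQi : Q * Q = Q)
    (η : ι → ℝ) (hη0 : ∀ b, 0 ≤ η b) (hη1 : ∀ b, η b ≤ 1)
    (p q : ι → d → ℂ)
    (hpon : ∀ b b', star (p b) ⬝ᵥ p b' = if b = b' then 1 else 0)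
    (hqon : ∀ b b', star (q b) ⬝ᵥ q b' = if b = b' then 1 else 0)
    (hPp : ∀ b, P.mulVec (p b) = p b)
    (hQq : ∀ b, Q.mulVec (q b) = q b)
    (hoverlap : ∀ b, star (p b) ⬝ᵥ q b = (Real.sqrt (η b) : ℂ))
    (hPQ : P * Q = ∑ b, (η b : ℂ) • vecMulVec (p b) (star (q b)))
    (h : Matrix d d ℂ) (hh : h.IsHermitian)
    (hhP : h * P = P * h) (hhQ : h * Q = Q * h) :
    h * (∑ b ∈ Finset.univ.filter fun b => 0 < η b, vecMulVec (p b) (star (p b)))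
      = (∑ b ∈ Finset.univ.filter fun b => 0 < η b, vecMulVec (p b) (star (p b))) * h :=
  jordan_positive_part_commutes_general P Q hPh hQh η hη0 p q hpon hqon hPQ h hhP hhQ
end
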